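/- The penalty vector ρ is a left eigenvector of the ADMM evolution matrix with eigenvalue 1: ρᵀ·T_A = ρᵀ, where T_A = I−γ(A+B−2BA). -/

import Mathlib

open Matrix BigOperators

noncomputable section

variable {V : Type*} [Fintype V] [DecidableEq V]

/-- The extended index set `Ê = {(e,i) : e ∈ E, i an endpoint of e}`. -/
abbrev Ehat (G : SimpleGraph V) [DecidableRel G.Adj] : Type _ :=
  {p : Sym2 V × V // p.1 ∈ G.edgeSet ∧ p.2 ∈ p.1}

/-- The `|Ê| × |V|` matrix `S`, with `S_{(e,i),j} = 1` iff `j = i`. -/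
def Smat (G : SimpleGraph V) [DecidableRel G.Adj] : Matrix (Ehat G) V ℝ :=
  fun p j => if p.val.2 = j then 1 else 0

/-- The `|Ê| × |Ê|` block-diagonal matrix `Q`, whose block for edge `e = (i,j)` acts on
coordinates `(e,i), (e,j)` as `q_e · [[1,-1],[-1,1]]`. -/
def Qmat (G : SimpleGraph V) [DecidableRel G.Adj] (q : Sym2 V → ℝ) :
    Matrix (Ehat G) (Ehat G) ℝ :=
  fun p p' =>
    if p.val.1 = p'.val.1 then (if p.val.2 = p'.val.2 then q p.val.1 else - q p.val.1) else 0

/-- The element `(e, i)` of `Ê` associated with an edge `e = (i,j)`. -/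
def eFst {G : SimpleGraph V} [DecidableRel G.Adj] {i j : V} (h : G.Adj i j) : Ehat G :=
  ⟨(s(i,j), i), ⟨G.mem_edgeSet.mpr h, Sym2.mem_mk_left i j⟩⟩

/-- The element `(e, j)` of `Ê` associated with an edge `e = (i,j)`. -/
def eSnd {G : SimpleGraph V} [DecidableRel G.Adj] {i j : V} (h : G.Adj i j) : Ehat G :=
  ⟨(s(i,j), j), ⟨G.mem_edgeSet.mpr h, Sym2.mem_mk_right i j⟩⟩

/-- For `(e,i) ∈ Ê` with `e = (i,j)`, the element `(e,j)` given by the other endpoint. -/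
def otherE {G : SimpleGraph V} [DecidableRel G.Adj] (p : Ehat G) : Ehat G :=
  ⟨(p.val.1, Sym2.Mem.other' p.prop.2), ⟨p.prop.1, Sym2.other_mem' p.prop.2⟩⟩

/-!
Both `ρᵀ A = ρᵀ` and `ρᵀ B = ρᵀ`, so `ρᵀ T_A = ρᵀ - γ (ρᵀ + ρᵀ - 2 ρᵀ) = ρᵀ`.
For `A`: writing `ρᵀ = 1ᵀ D_ρ`, we get `ρᵀ (I + D_ρ⁻¹ Q) = 1ᵀ (D_ρ + Q) = ρᵀ` because the columns
of `Q` sum to zero; `I + D_ρ⁻¹ Q` is invertible since `D_ρ + Q` is strictly diagonally dominant.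
For `B`: since `S 1 = 1`, also `ρᵀ = 1ᵀ Sᵀ D_ρ`, and `1ᵀ Sᵀ D_ρ S (Sᵀ D_ρ S)⁻¹ Sᵀ D_ρ = 1ᵀ Sᵀ D_ρ`;
here `Sᵀ D_ρ S` is positive definite because `S` is injective, every vertex having an edge.
-/
section FixedRowVector

variable {n R : Type*} [Fintype n] [DecidableEq n] [CommRing R]

theorem vecMul_nonsing_inv_of_vecMul_eq {M : Matrix n n R} (hM : IsUnit M.det) {x : n → R}
    (hx : x ᵥ* M = x) : x ᵥ* M⁻¹ = x := by
  conv_lhs => rw [← hx]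
  rw [vecMul_vecMul, mul_nonsing_inv M hM, vecMul_one]

theorem one_vecMul_diagonal (d : n → R) : (1 : n → R) ᵥ* diagonal d = d :=
  funext fun i => by rw [vecMul_diagonal, Pi.one_apply, one_mul]

theorem vecMul_weightedProjection {m : Type*} [Fintype m] {S : Matrix m n R} {D : Matrix m m R}
    (hN : IsUnit (Sᵀ * D * S).det) (u : n → R) :
    (u ᵥ* (Sᵀ * D)) ᵥ* (S * (Sᵀ * D * S)⁻¹ * Sᵀ * D) = u ᵥ* (Sᵀ * D) := by
  simp only [vecMul_vecMul, ← Matrix.mul_assoc, mul_nonsing_inv _ hN, Matrix.one_mul]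

theorem vecMul_one_sub_smul_eq_of_vecMul_eq {x : n → R} {A B : Matrix n n R}
    (hA : x ᵥ* A = x) (hB : x ᵥ* B = x) (γ : R) :
    x ᵥ* (1 - γ • (A + B - (2 : R) • (B * A))) = x := by
  rw [vecMul_sub, vecMul_one, vecMul_smul, vecMul_sub, vecMul_add, vecMul_smul,
    ← vecMul_vecMul, hA, hB, hA, two_smul, sub_self, smul_zero, sub_zero]

theorem vecMul_vecMul_one_add_nonsing_inv_mul {D M : Matrix n n R} (hD : IsUnit D.det)
    (x : n → R) : (x ᵥ* D) ᵥ* (1 + D⁻¹ * M) = x ᵥ* (D + M) := by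
  rw [vecMul_vecMul, Matrix.mul_add, Matrix.mul_one, mul_nonsing_inv_cancel_left _ _ hD]

theorem isUnit_det_one_add_nonsing_inv_mul {D M : Matrix n n R} (hD : IsUnit D.det)
    (hDM : IsUnit (D + M).det) : IsUnit (1 + D⁻¹ * M).det := by
  rw [← nonsing_inv_mul D hD, ← Matrix.mul_add, det_mul]
  exact (isUnit_nonsing_inv_det D hD).mul hDM

end FixedRowVector

theorem isUnit_det_diagonal_add {n : Type*} [Fintype n] [DecidableEq n]
    {c : n → ℝ} (hc : ∀ k, 0 < c k) {M : Matrix n n ℝ}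
    (hM : ∀ k, ∑ j ∈ Finset.univ.erase k, |M k j| ≤ M k k) :
    IsUnit (diagonal c + M).det := by
  refine isUnit_iff_ne_zero.mpr (det_ne_zero_of_sum_row_lt_diag fun k => ?_)
  have hoff : ∑ j ∈ Finset.univ.erase k, ‖(diagonal c + M) k j‖
      = ∑ j ∈ Finset.univ.erase k, |M k j| :=
    Finset.sum_congr rfl fun j hj => by
      rw [Matrix.add_apply, diagonal_apply_ne _ (Finset.ne_of_mem_erase hj).symm, zero_add,
        Real.norm_eq_abs]
  rw [hoff, Matrix.add_apply, diagonal_apply_eq, Real.norm_eq_abs]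
  calc ∑ j ∈ Finset.univ.erase k, |M k j| ≤ M k k := hM k
    _ < c k + M k k := lt_add_of_pos_left _ (hc k)
    _ ≤ |c k + M k k| := le_abs_self _

section OtherEndpoint

omit [Fintype V]

variable {G : SimpleGraph V} [DecidableRel G.Adj]

theorem otherE_fst (p : Ehat G) : (otherE p).val.1 = p.val.1 := rfl

theorem otherE_snd_ne (p : Ehat G) : (otherE p).val.2 ≠ p.val.2 := by
  have := Sym2.other_ne (G.not_isDiag_of_mem_edgeSet p.prop.1) p.prop.2
  rwa [Sym2.other_eq_other' p.prop.2] at this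

theorem otherE_ne (p : Ehat G) : otherE p ≠ p := fun h => otherE_snd_ne p (by rw [h])

theorem eq_or_eq_otherE_of_fst_eq {p p' : Ehat G} (h : p.val.1 = p'.val.1) :
    p = p' ∨ p = otherE p' := by
  have hm : p.val.2 ∈ p'.val.1 := h ▸ p.prop.2
  rw [← Sym2.other_spec' p'.prop.2, Sym2.mem_iff] at hm
  exact hm.imp (fun h2 => Subtype.ext (Prod.ext h h2)) (fun h2 => Subtype.ext (Prod.ext h h2))

theorem Qmat_apply_self (q : Sym2 V → ℝ) (p : Ehat G) : Qmat G q p p = q p.val.1 := by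
  simp [Qmat]

theorem Qmat_apply_otherE (q : Sym2 V → ℝ) (p : Ehat G) :
    Qmat G q p (otherE p) = -q p.val.1 := by
  rw [Qmat, if_pos (otherE_fst p).symm, if_neg (otherE_snd_ne p).symm]

theorem Qmat_otherE_apply (q : Sym2 V → ℝ) (p : Ehat G) :
    Qmat G q (otherE p) p = -q p.val.1 := by
  rw [Qmat, if_pos (otherE_fst p), if_neg (otherE_snd_ne p), otherE_fst]

theorem Qmat_apply_eq_zero (q : Sym2 V → ℝ) {p p' : Ehat G} (h : p.val.1 ≠ p'.val.1) :
    Qmat G q p p' = 0 := by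
  rw [Qmat, if_neg h]

theorem Qmat_apply_eq_zero_of_ne {q : Sym2 V → ℝ} {p p' : Ehat G} (h : p' ≠ p)
    (h' : p' ≠ otherE p) : Qmat G q p p' = 0 :=
  Qmat_apply_eq_zero q fun he => (eq_or_eq_otherE_of_fst_eq he.symm).elim h h'

end OtherEndpoint

section GraphMatrices

variable {G : SimpleGraph V} [DecidableRel G.Adj]

theorem sum_abs_Qmat_erase_le {q : Sym2 V → ℝ} (hq : ∀ e ∈ G.edgeSet, 0 ≤ q e) (p : Ehat G) :
    ∑ j ∈ Finset.univ.erase p, |Qmat G q p j| ≤ Qmat G q p p := by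
  rw [Finset.sum_eq_single_of_mem (otherE p)
    (Finset.mem_erase.mpr ⟨otherE_ne p, Finset.mem_univ _⟩) fun j hj hne => by
      rw [Qmat_apply_eq_zero_of_ne (Finset.ne_of_mem_erase hj) hne, abs_zero],
    Qmat_apply_otherE, Qmat_apply_self, abs_neg, abs_of_nonneg (hq _ p.prop.1)]

theorem one_vecMul_Qmat (q : Sym2 V → ℝ) : (1 : Ehat G → ℝ) ᵥ* Qmat G q = 0 := by
  funext p'
  simp only [vecMul, dotProduct, Pi.one_apply, one_mul, Pi.zero_apply]
  rw [Fintype.sum_eq_add p' (otherE p') (otherE_ne p').symm fun p hp =>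
      Qmat_apply_eq_zero q fun he => (eq_or_eq_otherE_of_fst_eq he).elim hp.1 hp.2,
    Qmat_apply_self, Qmat_otherE_apply, add_neg_cancel]

theorem isUnit_det_diagonal_add_Qmat {q : Sym2 V → ℝ} (hq : ∀ e ∈ G.edgeSet, 0 ≤ q e)
    {ρ : Ehat G → ℝ} (hρ : ∀ p, 0 < ρ p) : IsUnit (diagonal ρ + Qmat G q).det :=
  isUnit_det_diagonal_add hρ (sum_abs_Qmat_erase_le hq)

theorem Smat_mulVec_apply (x : V → ℝ) (p : Ehat G) : (Smat G *ᵥ x) p = x p.val.2 := by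
  simp [Smat, mulVec, dotProduct]

theorem Smat_mulVec_one : Smat G *ᵥ (1 : V → ℝ) = 1 :=
  funext fun p => Smat_mulVec_apply 1 p

theorem Smat_mulVec_injective (hG : ∀ v : V, ∃ w, G.Adj v w) :
    Function.Injective (Smat G).mulVec := by
  intro x y hxy
  funext v
  obtain ⟨w, hvw⟩ := hG v
  have := congrFun hxy (eFst hvw)
  rwa [Smat_mulVec_apply, Smat_mulVec_apply] at this

theorem isUnit_det_Smat_transpose_mul_diagonal_mul_Smat (hG : ∀ v : V, ∃ w, G.Adj v w)
    {ρ : Ehat G → ℝ} (hρ : ∀ p, 0 < ρ p) : IsUnit ((Smat G)ᵀ * diagonal ρ * Smat G).det := by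
  have hpos := (PosDef.diagonal hρ).conjTranspose_mul_mul_same (Smat_mulVec_injective hG)
  rw [conjTranspose_eq_transpose_of_trivial] at hpos
  exact (isUnit_iff_isUnit_det _).mp hpos.isUnit

theorem one_vecMul_Smat_transpose_mul_diagonal (ρ : Ehat G → ℝ) :
    (1 : V → ℝ) ᵥ* ((Smat G)ᵀ * diagonal ρ) = ρ := by
  rw [← vecMul_vecMul, vecMul_transpose, Smat_mulVec_one, one_vecMul_diagonal]

end GraphMatrices

theorem rho_left_eigenvector_TA_general
    (G : SimpleGraph V) [DecidableRel G.Adj]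
    (hG : ∀ v : V, ∃ w, G.Adj v w)
    (q : Sym2 V → ℝ) (hq : ∀ e ∈ G.edgeSet, 0 < q e)
    (ρ : Ehat G → ℝ) (hρ : ∀ p, 0 < ρ p)
    (γ : ℝ) :
    let S := Smat G
    let Q := Qmat G q
    let Dρ := Matrix.diagonal ρ
    let A := (1 + Dρ⁻¹ * Q)⁻¹
    let B := S * (Sᵀ * Dρ * S)⁻¹ * Sᵀ * Dρ
    let TA := 1 - γ • (A + B - (2 : ℝ) • (B * A))
    Matrix.vecMul ρ TA = ρ := by
  intro S Q Dρ A B TA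
  have hD : IsUnit Dρ.det := (isUnit_iff_isUnit_det _).mp (PosDef.diagonal hρ).isUnit
  have hA : ρ ᵥ* A = ρ := by
    refine vecMul_nonsing_inv_of_vecMul_eq (isUnit_det_one_add_nonsing_inv_mul hD
      (isUnit_det_diagonal_add_Qmat (fun e he => (hq e he).le) hρ)) ?_
    rw [← one_vecMul_diagonal ρ, vecMul_vecMul_one_add_nonsing_inv_mul hD, vecMul_add,
      one_vecMul_Qmat, add_zero]
  have hB : ρ ᵥ* B = ρ := by
    rw [← one_vecMul_Smat_transpose_mul_diagonal ρ]
    exact vecMul_weightedProjection (isUnit_det_Smat_transpose_mul_diagonal_mul_Smat hG hρ) 1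
  exact vecMul_one_sub_smul_eq_of_vecMul_eq hA hB γ

/-- **`ρ` is a left eigenvector of `T_A` with eigenvalue 1**: `ρᵀ T_A = ρᵀ`. -/
theorem rho_left_eigenvector_TA
    (G : SimpleGraph V) [DecidableRel G.Adj]
    (hG : ∀ v : V, ∃ w, G.Adj v w)
    (q : Sym2 V → ℝ) (hq : ∀ e ∈ G.edgeSet, 0 < q e)
    (ρ : Ehat G → ℝ) (hρ : ∀ p, 0 < ρ p)
    (γ : ℝ) (hγ : γ ∈ Set.Ioo (0 : ℝ) 2) :
    let S := Smat G
    let Q := Qmat G q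
    let Dρ := Matrix.diagonal ρ
    let A := (1 + Dρ⁻¹ * Q)⁻¹
    let B := S * (Sᵀ * Dρ * S)⁻¹ * Sᵀ * Dρ
    let TA := 1 - γ • (A + B - (2 : ℝ) • (B * A))
    Matrix.vecMul ρ TA = ρ :=
  rho_left_eigenvector_TA_general G hG q hq ρ hρ γ
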